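/- Let {x_k}, {τ_k}, {Δ_k}, {A_k} be generated by the TRFD algorithm. If ψ_{p,Δ_*}(x_k) > ε and Δ_k ≤ (1−α)θ η_{p,Δ_*}(x_k;A_k) / (L_{h,p} L_J c_{p,2}(m) c_{2,p}(n)²), then iteration k is successful, i.e. η_{p,Δ_*}(x_k;A_k) ≥ ε/2 and ρ_k ≥ α. -/

import Mathlib

open scoped ENNReal

noncomputable section

/-- The `p`-norm on `ℝ^n`, for `p ∈ [1,∞]`. -/
def pNorm (p : ℝ≥0∞) {n : ℕ} (x : Fin n → ℝ) : ℝ :=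
  if p = ∞ then ⨆ i, |x i| else (∑ i, |x i| ^ p.toReal) ^ (1 / p.toReal)

/-- The Euclidean norm on `ℝ^n`. -/
def eucNorm {n : ℕ} (x : Fin n → ℝ) : ℝ := Real.sqrt (∑ i, x i ^ 2)

/-- The operator norm of a matrix, induced by Euclidean norms. -/
def opNorm2 {m n : ℕ} (A : Matrix (Fin m) (Fin n) ℝ) : ℝ :=
  sSup ((fun v => eucNorm (A.mulVec v)) '' {v | eucNorm v ≤ 1})

/-- Forward finite-difference approximation of the Jacobian of `F` at `x` with stepsize `τ`:
the `j`-th column is `(F (x + τ e_j) - F x) / τ`. -/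
def fdMatrix {n m : ℕ} (F : (Fin n → ℝ) → (Fin m → ℝ)) (x : Fin n → ℝ) (τ : ℝ) :
    Matrix (Fin m) (Fin n) ℝ :=
  Matrix.of fun i j => (F (x + Pi.single j τ) i - F x i) / τ

/-- Stationarity measure `ψ_{p,r}(x)`. -/
def psi {n m : ℕ} (Ω : Set (Fin n → ℝ)) (F : (Fin n → ℝ) → (Fin m → ℝ))
    (h : (Fin m → ℝ) → ℝ) (J : (Fin n → ℝ) → Matrix (Fin m) (Fin n) ℝ)
    (p : ℝ≥0∞) (r : ℝ) (x : Fin n → ℝ) : ℝ :=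
  r⁻¹ * (h (F x) -
    sInf ((fun s => h (F x + (J x).mulVec s)) '' {s | x + s ∈ Ω ∧ pNorm p s ≤ r}))

/-- Approximate stationarity measure `η_{p,r}(x; A)`. -/
def eta {n m : ℕ} (Ω : Set (Fin n → ℝ)) (F : (Fin n → ℝ) → (Fin m → ℝ))
    (h : (Fin m → ℝ) → ℝ) (p : ℝ≥0∞) (r : ℝ) (x : Fin n → ℝ)
    (A : Matrix (Fin m) (Fin n) ℝ) : ℝ :=
  r⁻¹ * (h (F x) -
    sInf ((fun s => h (F x + A.mulVec s)) '' {s | x + s ∈ Ω ∧ pNorm p s ≤ r}))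

/-- The TRFD algorithm: `x`, `τ`, `Δ`, `A`, `d`, `ρ` are the iterates, finite-difference
stepsizes, trust-region radii, finite-difference Jacobian approximations, trial steps and
ratios generated by TRFD with parameters `ε, σ, α, θ, Δstar` from the point `x 0`. -/
def TRFDrun {n m : ℕ} (Ω : Set (Fin n → ℝ)) (F : (Fin n → ℝ) → (Fin m → ℝ))
    (h : (Fin m → ℝ) → ℝ) (p : ℝ≥0∞)
    (Lh cpm cnp ε σ α θ Δstar : ℝ)
    (x : ℕ → Fin n → ℝ) (τ Δ : ℕ → ℝ) (A : ℕ → Matrix (Fin m) (Fin n) ℝ)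
    (d : ℕ → Fin n → ℝ) (ρ : ℕ → ℝ) : Prop :=
  x 0 ∈ Ω ∧
  τ 0 = ε / (Lh * σ * cpm * cnp * Real.sqrt n) ∧
  τ 0 * Real.sqrt n ≤ Δ 0 ∧ Δ 0 ≤ Δstar ∧
  (∀ k, A k = fdMatrix F (x k) (τ k)) ∧
  (∀ k,
    -- unsuccessful iteration of type I
    (eta Ω F h p Δstar (x k) (A k) < ε / 2 ∧
      x (k + 1) = x k ∧ Δ (k + 1) = Δ k ∧ τ (k + 1) = τ k / 2) ∨
    (ε / 2 ≤ eta Ω F h p Δstar (x k) (A k) ∧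
      -- the trial step is feasible and achieves a `θ`-fraction of the optimal model decrease
      pNorm p (d k) ≤ Δ k ∧ x k + d k ∈ Ω ∧
      θ * (h (F (x k)) -
          sInf ((fun s => h (F (x k) + (A k).mulVec s)) ''
            {s | x k + s ∈ Ω ∧ pNorm p s ≤ Δ k})) ≤
        h (F (x k)) - h (F (x k) + (A k).mulVec (d k)) ∧
      ρ k = (h (F (x k)) - h (F (x k + d k))) /
            (h (F (x k)) - h (F (x k) + (A k).mulVec (d k))) ∧
      -- successful iteration
      ((α ≤ ρ k ∧ x (k + 1) = x k + d k ∧ Δ (k + 1) = min (2 * Δ k) Δstar ∧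
          τ (k + 1) = τ k) ∨
      -- unsuccessful iteration of type II
       (ρ k < α ∧ τ k * Real.sqrt n ≤ Δ k / 2 ∧
          x (k + 1) = x k ∧ Δ (k + 1) = Δ k / 2 ∧ τ (k + 1) = τ k) ∨
      -- unsuccessful iteration of type III
       (ρ k < α ∧ Δ k / 2 < τ k * Real.sqrt n ∧
          x (k + 1) = x k ∧ Δ (k + 1) = Δ k / 2 ∧ τ (k + 1) = τ k / 2))))

/-!
Two estimates drive the proof. Each column of `A_k - J(x_k)` is a first-order Taylor remainder
divided by `τ_k`, so `‖(A_k - J(x_k)) v‖₂ ≤ L_J τ_k √n / 2 ‖v‖₂`; hence replacing `J` by `A_k`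
changes the optimal model decrease by at most `L_h c_{p,2} c_{2,p} L_J τ_k √n / 2`, and since
`τ_k √n ≤ Δ_k` along every run, the bound on `Δ_k` makes this at most `η / 2`, giving
`ψ ≤ 3η / 2`. Second, by convexity of `h` the model decrease over radius `Δ_k ≤ Δ_*` is at least
`Δ_k η`, so the trial step predicts at least `θ Δ_k η`, while the model error
`|h(F(x_k + d_k)) - h(F(x_k) + A_k d_k)|` is at most `L_h c_{p,2} L_J c_{2,p}² Δ_k²`; the bound on
`Δ_k` makes this at most `(1 - α)` times the predicted decrease, so `ρ_k ≥ α`.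
-/

open Matrix

section EuclideanNorm

variable {k : ℕ}

lemma eucNorm_eq_norm_toLp (v : Fin k → ℝ) :
    eucNorm v = ‖(WithLp.toLp 2 v : EuclideanSpace ℝ (Fin k))‖ := by
  simp [eucNorm, EuclideanSpace.norm_eq]

lemma eucNorm_nonneg (v : Fin k → ℝ) : 0 ≤ eucNorm v := Real.sqrt_nonneg _

lemma eucNorm_smul (t : ℝ) (v : Fin k → ℝ) : eucNorm (t • v) = |t| * eucNorm v := by
  simp only [eucNorm_eq_norm_toLp, WithLp.toLp_smul, norm_smul, Real.norm_eq_abs]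

lemma eucNorm_sub_le (v w : Fin k → ℝ) : eucNorm (v - w) ≤ eucNorm v + eucNorm w := by
  simpa only [eucNorm_eq_norm_toLp, WithLp.toLp_sub] using norm_sub_le _ _

lemma eucNorm_sub_comm (v w : Fin k → ℝ) : eucNorm (v - w) = eucNorm (w - v) := by
  simp only [eucNorm_eq_norm_toLp, WithLp.toLp_sub, norm_sub_rev]

lemma eucNorm_sum_le {ι : Type*} (s : Finset ι) (f : ι → Fin k → ℝ) :
    eucNorm (∑ j ∈ s, f j) ≤ ∑ j ∈ s, eucNorm (f j) := by
  simpa only [eucNorm_eq_norm_toLp, WithLp.toLp_sum] using norm_sum_le _ _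

lemma eucNorm_single (j : Fin k) (t : ℝ) : eucNorm (Pi.single j t) = |t| := by
  simp [eucNorm_eq_norm_toLp]

lemma sum_abs_le_sqrt_mul_eucNorm (v : Fin k → ℝ) :
    ∑ j, |v j| ≤ Real.sqrt k * eucNorm v := by
  rw [eucNorm, ← Real.sqrt_mul (Nat.cast_nonneg k)]
  refine Real.le_sqrt_of_sq_le ?_
  simpa [sq_abs] using sq_sum_le_card_mul_sum_sq (s := Finset.univ) (f := fun j => |v j|)

lemma eucNorm_mulVec_le_of_col {l : ℕ} (M : Matrix (Fin l) (Fin k) ℝ) {c : ℝ}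
    (hc : ∀ j, eucNorm (Mᵀ j) ≤ c) (v : Fin k → ℝ) :
    eucNorm (M *ᵥ v) ≤ c * Real.sqrt k * eucNorm v := by
  rcases isEmpty_or_nonempty (Fin k) with hk | ⟨⟨j₀⟩⟩
  · simp [Subsingleton.elim v 0, eucNorm]
  have hc0 : 0 ≤ c := (eucNorm_nonneg _).trans (hc j₀)
  calc eucNorm (M *ᵥ v) = eucNorm (∑ j, v j • Mᵀ j) := by
        simp only [mulVec_eq_sum, op_smul_eq_smul]
    _ ≤ ∑ j, |v j| * c := by
        refine (eucNorm_sum_le _ _).trans (Finset.sum_le_sum fun j _ => ?_)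
        rw [eucNorm_smul]
        exact mul_le_mul_of_nonneg_left (hc j) (abs_nonneg _)
    _ ≤ c * Real.sqrt k * eucNorm v := by
        rw [← Finset.sum_mul, mul_comm, mul_assoc]
        exact mul_le_mul_of_nonneg_left (sum_abs_le_sqrt_mul_eucNorm v) hc0

variable {l : ℕ}

lemma bddAbove_image_eucNorm_mulVec (A : Matrix (Fin l) (Fin k) ℝ) :
    BddAbove ((fun v => eucNorm (A *ᵥ v)) '' {v | eucNorm v ≤ 1}) := by
  set c := ∑ j, eucNorm (Aᵀ j)
  have hc : ∀ j, eucNorm (Aᵀ j) ≤ c := fun j =>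
    Finset.single_le_sum (fun j _ => eucNorm_nonneg (Aᵀ j)) (Finset.mem_univ j)
  refine ⟨c * Real.sqrt k, ?_⟩
  rintro _ ⟨v, hv, rfl⟩
  calc eucNorm (A *ᵥ v) ≤ c * Real.sqrt k * eucNorm v := eucNorm_mulVec_le_of_col A hc v
    _ ≤ c * Real.sqrt k := mul_le_of_le_one_right
        (mul_nonneg (Finset.sum_nonneg fun j _ => eucNorm_nonneg _) (Real.sqrt_nonneg _)) hv

lemma eucNorm_mulVec_le_opNorm2 (A : Matrix (Fin l) (Fin k) ℝ) (v : Fin k → ℝ) :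
    eucNorm (A *ᵥ v) ≤ opNorm2 A * eucNorm v := by
  rcases (eucNorm_nonneg v).eq_or_lt with hv | hv
  · have : v = 0 := by
      simpa [eucNorm_eq_norm_toLp] using hv.symm
    simp [this, eucNorm]
  · have hunit : eucNorm ((eucNorm v)⁻¹ • v) ≤ 1 := by
      rw [eucNorm_smul, abs_of_pos (inv_pos.mpr hv), inv_mul_cancel₀ hv.ne']
    have : eucNorm (A *ᵥ ((eucNorm v)⁻¹ • v)) ≤ opNorm2 A :=
      le_csSup (bddAbove_image_eucNorm_mulVec A) ⟨_, hunit, rfl⟩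
    rw [mulVec_smul, eucNorm_smul, abs_of_pos (inv_pos.mpr hv), inv_mul_le_iff₀ hv] at this
    simpa only [mul_comm] using this

end EuclideanNorm

/-- A fencing argument: along `t ↦ x + t • d` the remainder has derivative of norm at most
`L ‖d‖² t`, the derivative of the barrier `L / 2 * ‖d‖² t²`. -/
theorem norm_image_add_sub_sub_le_of_lipschitz_fderiv {E F : Type*} [NormedAddCommGroup E]
    [NormedSpace ℝ E] [NormedAddCommGroup F] [NormedSpace ℝ F] {f : E → F}
    {f' : E → E →L[ℝ] F} {L : ℝ} (hf : ∀ y, HasFDerivAt f (f' y) y)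
    (hf' : ∀ y z, ‖f' y - f' z‖ ≤ L * ‖y - z‖) (x d : E) :
    ‖f (x + d) - f x - f' x d‖ ≤ L / 2 * ‖d‖ ^ 2 := by
  set g : ℝ → F := fun t => f (x + t • d) - f x - t • f' x d
  have hg : ∀ t, HasDerivAt g (f' (x + t • d) d - f' x d) t := by
    intro t
    have hγ : HasDerivAt (fun t : ℝ => x + t • d) d t := by
      simpa using ((hasDerivAt_id t).smul_const d).const_add x
    simpa using (((hf _).comp_hasDerivAt t hγ).sub_const (f x)).fun_sub
      ((hasDerivAt_id t).smul_const (f' x d))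
  have hg' : ∀ t ∈ Set.Ico (0 : ℝ) 1, ‖f' (x + t • d) d - f' x d‖ ≤ L * ‖d‖ ^ 2 * t := by
    intro t ht
    calc ‖f' (x + t • d) d - f' x d‖ = ‖(f' (x + t • d) - f' x) d‖ := rfl
      _ ≤ ‖f' (x + t • d) - f' x‖ * ‖d‖ := ContinuousLinearMap.le_opNorm _ _
      _ ≤ L * ‖t • d‖ * ‖d‖ := by
          gcongr; simpa using hf' (x + t • d) x
      _ = L * ‖d‖ ^ 2 * t := by
          rw [norm_smul, Real.norm_of_nonneg ht.1]; ring
  have hB : ∀ t, HasDerivAt (fun t => L / 2 * ‖d‖ ^ 2 * t ^ 2) (L * ‖d‖ ^ 2 * t) t := by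
    intro t
    exact ((hasDerivAt_pow 2 t).const_mul _).congr_deriv (by norm_num; ring)
  have := image_norm_le_of_norm_deriv_right_le_deriv_boundary
    (fun t _ => (hg t).continuousAt.continuousWithinAt) (fun t _ => (hg t).hasDerivWithinAt)
    (by simp [g]) hB hg' (Set.right_mem_Icc.2 zero_le_one)
  simpa [g] using this

section Jacobian

variable {n m : ℕ} {F : (Fin n → ℝ) → (Fin m → ℝ)} {J : (Fin n → ℝ) → Matrix (Fin m) (Fin n) ℝ}
  {LJ : ℝ}

theorem eucNorm_sub_sub_mulVec_le (hLJ : 0 ≤ LJ)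
    (hJ : ∀ y, HasFDerivAt F (LinearMap.toContinuousLinearMap (Matrix.mulVecLin (J y))) y)
    (hJLip : ∀ y z, opNorm2 (J y - J z) ≤ LJ * eucNorm (y - z)) (x d : Fin n → ℝ) :
    eucNorm (F (x + d) - F x - J x *ᵥ d) ≤ LJ / 2 * eucNorm d ^ 2 := by
  let eN := EuclideanSpace.equiv (Fin n) ℝ
  let eM := EuclideanSpace.equiv (Fin m) ℝ
  let G' : EuclideanSpace ℝ (Fin n) → EuclideanSpace ℝ (Fin n) →L[ℝ] EuclideanSpace ℝ (Fin m) :=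
    fun y => (eM.symm : (Fin m → ℝ) →L[ℝ] _).comp
      ((LinearMap.toContinuousLinearMap (Matrix.mulVecLin (J (eN y)))).comp
        (eN : EuclideanSpace ℝ (Fin n) →L[ℝ] (Fin n → ℝ)))
  have hN : ∀ v, eucNorm (eN v) = ‖v‖ := fun v => eucNorm_eq_norm_toLp (eN v)
  have hM : ∀ w, ‖eM.symm w‖ = eucNorm w := fun w => (eucNorm_eq_norm_toLp w).symm
  have hG : ∀ y, HasFDerivAt (eM.symm ∘ F ∘ eN) (G' y) y := fun y =>
    eM.symm.hasFDerivAt.comp y ((hJ (eN y)).comp y eN.hasFDerivAt)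
  have hG' : ∀ y z, ‖G' y - G' z‖ ≤ LJ * ‖y - z‖ := by
    intro y z
    refine ContinuousLinearMap.opNorm_le_bound _ (by positivity) fun v => ?_
    calc ‖(G' y - G' z) v‖ = eucNorm ((J (eN y) - J (eN z)) *ᵥ eN v) := by
          simp [G', ← hM, Matrix.sub_mulVec]
      _ ≤ opNorm2 (J (eN y) - J (eN z)) * eucNorm (eN v) := eucNorm_mulVec_le_opNorm2 _ _
      _ ≤ LJ * ‖y - z‖ * ‖v‖ := by
          rw [hN]
          gcongr
          calc opNorm2 (J (eN y) - J (eN z)) ≤ LJ * eucNorm (eN y - eN z) := hJLip _ _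
            _ = LJ * ‖y - z‖ := by rw [← map_sub, hN]
  simpa [← hM, ← hN, G'] using
    norm_image_add_sub_sub_le_of_lipschitz_fderiv hG hG' (eN.symm x) (eN.symm d)

lemma fdMatrix_sub_transpose_apply (x : Fin n → ℝ) {τ : ℝ} (hτ : τ ≠ 0) (j : Fin n) :
    (fdMatrix F x τ - J x)ᵀ j = τ⁻¹ • (F (x + Pi.single j τ) - F x - J x *ᵥ Pi.single j τ) := by
  ext i
  simp only [fdMatrix, transpose_apply, Matrix.sub_apply, of_apply, mulVec_single,
    op_smul_eq_smul, Pi.smul_apply, Pi.sub_apply, col_apply, smul_eq_mul]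
  field_simp

theorem eucNorm_fdMatrix_sub_mulVec_le (hLJ : 0 ≤ LJ)
    (hJ : ∀ y, HasFDerivAt F (LinearMap.toContinuousLinearMap (Matrix.mulVecLin (J y))) y)
    (hJLip : ∀ y z, opNorm2 (J y - J z) ≤ LJ * eucNorm (y - z)) (x : Fin n → ℝ) {τ : ℝ}
    (hτ : 0 < τ) (v : Fin n → ℝ) :
    eucNorm ((fdMatrix F x τ - J x) *ᵥ v) ≤ LJ * τ / 2 * Real.sqrt n * eucNorm v := by
  refine eucNorm_mulVec_le_of_col _ (fun j => ?_) v
  rw [fdMatrix_sub_transpose_apply x hτ.ne', eucNorm_smul, abs_of_pos (inv_pos.2 hτ),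
    inv_mul_le_iff₀ hτ]
  refine (eucNorm_sub_sub_mulVec_le hLJ hJ hJLip x (Pi.single j τ)).trans_eq ?_
  rw [eucNorm_single, abs_of_pos hτ]
  ring

theorem eucNorm_sub_fdModel_le (hLJ : 0 ≤ LJ)
    (hJ : ∀ y, HasFDerivAt F (LinearMap.toContinuousLinearMap (Matrix.mulVecLin (J y))) y)
    (hJLip : ∀ y z, opNorm2 (J y - J z) ≤ LJ * eucNorm (y - z)) (x : Fin n → ℝ) {τ : ℝ}
    (hτ : 0 < τ) (d : Fin n → ℝ) :
    eucNorm (F (x + d) - (F x + fdMatrix F x τ *ᵥ d)) ≤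
      LJ / 2 * eucNorm d ^ 2 + LJ * τ / 2 * Real.sqrt n * eucNorm d := by
  have hsplit : F (x + d) - (F x + fdMatrix F x τ *ᵥ d) =
      (F (x + d) - F x - J x *ᵥ d) - (fdMatrix F x τ - J x) *ᵥ d := by
    rw [sub_mulVec]; abel
  rw [hsplit]
  exact (eucNorm_sub_le _ _).trans (add_le_add (eucNorm_sub_sub_mulVec_le hLJ hJ hJLip x d)
    (eucNorm_fdMatrix_sub_mulVec_le hLJ hJ hJLip x hτ d))

theorem eucNorm_sub_fdModel_le_sq (hLJ : 0 ≤ LJ)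
    (hJ : ∀ y, HasFDerivAt F (LinearMap.toContinuousLinearMap (Matrix.mulVecLin (J y))) y)
    (hJLip : ∀ y z, opNorm2 (J y - J z) ≤ LJ * eucNorm (y - z)) (x : Fin n → ℝ) {τ c r : ℝ}
    (hτ : 0 < τ) (hc : 1 ≤ c) (hτr : τ * Real.sqrt n ≤ r) {d : Fin n → ℝ}
    (hd : eucNorm d ≤ c * r) :
    eucNorm (F (x + d) - (F x + fdMatrix F x τ *ᵥ d)) ≤ LJ * c ^ 2 * r ^ 2 := by
  have hr : 0 ≤ r := (by positivity : 0 ≤ τ * Real.sqrt n).trans hτr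
  have hd0 := eucNorm_nonneg d
  calc _ ≤ LJ / 2 * eucNorm d ^ 2 + LJ / 2 * (τ * Real.sqrt n) * eucNorm d := by
        convert eucNorm_sub_fdModel_le hLJ hJ hJLip x hτ d using 2; ring
    _ ≤ LJ / 2 * (c * r) ^ 2 + LJ / 2 * r * (c * r) := by gcongr
    _ ≤ LJ / 2 * (c * r) ^ 2 + LJ / 2 * r * (c ^ 2 * r) := by
        gcongr; nlinarith
    _ = LJ * c ^ 2 * r ^ 2 := by ring

end Jacobian

section PNorm

variable {p : ℝ≥0∞} {k : ℕ}

lemma pNorm_zero (hp : p ≠ 0) : pNorm p (0 : Fin k → ℝ) = 0 := by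
  unfold pNorm
  split_ifs with h
  · simp
  · have : p.toReal ≠ 0 := ENNReal.toReal_ne_zero.2 ⟨hp, h⟩
    simp [Real.zero_rpow this, Real.zero_rpow (inv_ne_zero this)]

lemma pNorm_smul_of_nonneg (hp : p ≠ 0) {t : ℝ} (ht : 0 ≤ t) (v : Fin k → ℝ) :
    pNorm p (t • v) = t * pNorm p v := by
  unfold pNorm
  split_ifs with h
  · simp [Real.mul_iSup_of_nonneg ht, abs_mul, abs_of_nonneg ht]
  · have hq : p.toReal ≠ 0 := ENNReal.toReal_ne_zero.2 ⟨hp, h⟩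
    simp only [Pi.smul_apply, smul_eq_mul, abs_mul, abs_of_nonneg ht,
      Real.mul_rpow ht (abs_nonneg _), ← Finset.mul_sum]
    rw [Real.mul_rpow (by positivity) (by positivity), ← Real.rpow_mul ht, mul_one_div_cancel hq,
      Real.rpow_one]

end PNorm

lemma csInf_image_le_csInf_image_add {α : Type*} {S : Set α} (hS : S.Nonempty) {f g : α → ℝ}
    (hf : BddBelow (f '' S)) {c : ℝ} (hfg : ∀ s ∈ S, f s ≤ g s + c) :
    sInf (f '' S) ≤ sInf (g '' S) + c := by
  rw [← sub_le_iff_le_add]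
  refine le_csInf (hS.image g) ?_
  rintro _ ⟨s, hs, rfl⟩
  linarith [csInf_le hf ⟨s, hs, rfl⟩, hfg s hs]

lemma mul_sub_csInf_image_le {E : Type*} [AddCommGroup E] [Module ℝ E] {φ : E → ℝ}
    (hφ : ConvexOn ℝ Set.univ φ) {S T : Set E} (hS : S.Nonempty) (hT : BddBelow (φ '' T))
    {t : ℝ} (ht0 : 0 < t) (ht1 : t ≤ 1) (hST : ∀ s ∈ S, t • s ∈ T) :
    t * (φ 0 - sInf (φ '' S)) ≤ φ 0 - sInf (φ '' T) := by
  suffices (sInf (φ '' T) - (1 - t) * φ 0) / t ≤ sInf (φ '' S) by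
    rw [div_le_iff₀' ht0] at this; linarith
  refine le_csInf (hS.image φ) ?_
  rintro _ ⟨s, hs, rfl⟩
  rw [div_le_iff₀' ht0]
  have hseg := hφ.2 (Set.mem_univ 0) (Set.mem_univ s) (sub_nonneg.2 ht1) ht0.le
    (sub_add_cancel 1 t)
  simp only [smul_zero, zero_add, smul_eq_mul] at hseg
  linarith [csInf_le hT ⟨t • s, hST s hs, rfl⟩]

section TrustRegion

variable {n m : ℕ} {Ω : Set (Fin n → ℝ)} {p : ℝ≥0∞} {x : Fin n → ℝ} {h : (Fin m → ℝ) → ℝ}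

def trRegion (Ω : Set (Fin n → ℝ)) (p : ℝ≥0∞) (x : Fin n → ℝ) (r : ℝ) : Set (Fin n → ℝ) :=
  {s | x + s ∈ Ω ∧ pNorm p s ≤ r}

/-- The paper's `min` of the model over the trust region, as an `sInf` (not a junk value, by
`bddBelow_image_trRegion`). -/
def trModelInf (Ω : Set (Fin n → ℝ)) (h : (Fin m → ℝ) → ℝ) (p : ℝ≥0∞) (x : Fin n → ℝ) (r : ℝ)
    (w : Fin m → ℝ) (A : Matrix (Fin m) (Fin n) ℝ) : ℝ :=
  sInf ((fun s => h (w + A *ᵥ s)) '' trRegion Ω p x r)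

lemma eta_eq_trModelInf (F : (Fin n → ℝ) → (Fin m → ℝ)) (r : ℝ) (A : Matrix (Fin m) (Fin n) ℝ) :
    eta Ω F h p r x A = r⁻¹ * (h (F x) - trModelInf Ω h p x r (F x) A) := rfl

lemma psi_eq_trModelInf (F : (Fin n → ℝ) → (Fin m → ℝ))
    (J : (Fin n → ℝ) → Matrix (Fin m) (Fin n) ℝ) (r : ℝ) :
    psi Ω F h J p r x = r⁻¹ * (h (F x) - trModelInf Ω h p x r (F x) (J x)) := rfl

lemma zero_mem_trRegion (hp : p ≠ 0) (hx : x ∈ Ω) {r : ℝ} (hr : 0 ≤ r) :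
    0 ∈ trRegion Ω p x r :=
  ⟨by simpa using hx, by rwa [pNorm_zero hp]⟩

lemma smul_mem_trRegion (hp : p ≠ 0) (hΩ : Convex ℝ Ω) (hx : x ∈ Ω) {r t : ℝ} {s : Fin n → ℝ}
    (hs : s ∈ trRegion Ω p x r) (ht0 : 0 ≤ t) (ht1 : t ≤ 1) : t • s ∈ trRegion Ω p x (t * r) := by
  refine ⟨?_, ?_⟩
  · convert hΩ hx hs.1 (sub_nonneg.2 ht1) ht0 (sub_add_cancel 1 t) using 1
    module
  · rw [pNorm_smul_of_nonneg hp ht0]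
    exact mul_le_mul_of_nonneg_left hs.2 ht0

variable {L c : ℝ}

lemma bddBelow_image_trRegion (hL : 0 ≤ L) (hh : ∀ z w, |h z - h w| ≤ L * eucNorm (z - w))
    (hc0 : 0 ≤ c) (hc : ∀ s : Fin n → ℝ, eucNorm s ≤ c * pNorm p s) (r : ℝ) (w : Fin m → ℝ)
    (A : Matrix (Fin m) (Fin n) ℝ) :
    BddBelow ((fun s => h (w + A *ᵥ s)) '' trRegion Ω p x r) := by
  set κ := ∑ j, eucNorm (Aᵀ j)
  have hκ : ∀ j, eucNorm (Aᵀ j) ≤ κ := fun j =>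
    Finset.single_le_sum (fun j _ => eucNorm_nonneg (Aᵀ j)) (Finset.mem_univ j)
  have hκ0 : 0 ≤ κ := Finset.sum_nonneg fun j _ => eucNorm_nonneg _
  refine ⟨h w - L * (κ * Real.sqrt n * (c * r)), ?_⟩
  rintro _ ⟨s, hs, rfl⟩
  have hAs : eucNorm (A *ᵥ s) ≤ κ * Real.sqrt n * (c * r) :=
    (eucNorm_mulVec_le_of_col A hκ s).trans <| mul_le_mul_of_nonneg_left
      ((hc s).trans (mul_le_mul_of_nonneg_left hs.2 hc0)) (by positivity)
  have hdiff := (le_abs_self _).trans (hh w (w + A *ᵥ s))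
  rw [eucNorm_sub_comm, add_sub_cancel_left] at hdiff
  dsimp only
  linarith [mul_le_mul_of_nonneg_left hAs hL]

lemma psi_le_eta_add (F : (Fin n → ℝ) → (Fin m → ℝ)) (J : (Fin n → ℝ) → Matrix (Fin m) (Fin n) ℝ)
    (hp : p ≠ 0) (hx : x ∈ Ω) {R : ℝ} (hR : 0 < R) (hL : 0 ≤ L)
    (hh : ∀ z w, |h z - h w| ≤ L * eucNorm (z - w)) (hc0 : 0 ≤ c)
    (hc : ∀ s : Fin n → ℝ, eucNorm s ≤ c * pNorm p s) {A : Matrix (Fin m) (Fin n) ℝ} {κ : ℝ}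
    (hκ0 : 0 ≤ κ) (hA : ∀ s, eucNorm ((A - J x) *ᵥ s) ≤ κ * eucNorm s) :
    psi Ω F h J p R x ≤ eta Ω F h p R x A + L * κ * c := by
  have hinf : trModelInf Ω h p x R (F x) A ≤ trModelInf Ω h p x R (F x) (J x) + L * κ * c * R := by
    refine csInf_image_le_csInf_image_add ⟨0, zero_mem_trRegion hp hx hR.le⟩
      (bddBelow_image_trRegion hL hh hc0 hc R _ _) fun s hs => ?_
    have hgap := hh (F x + A *ᵥ s) (F x + J x *ᵥ s)
    rw [add_sub_add_left_eq_sub, ← sub_mulVec] at hgap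
    have hAs : eucNorm ((A - J x) *ᵥ s) ≤ κ * c * R := calc
      _ ≤ κ * eucNorm s := hA s
      _ ≤ κ * (c * R) := by gcongr; exact (hc s).trans (by gcongr; exact hs.2)
      _ = κ * c * R := by ring
    linarith [le_abs_self (h (F x + A *ᵥ s) - h (F x + J x *ᵥ s)),
      mul_le_mul_of_nonneg_left hAs hL]
  rw [psi_eq_trModelInf, eta_eq_trModelInf]
  calc R⁻¹ * (h (F x) - trModelInf Ω h p x R (F x) (J x))
      ≤ R⁻¹ * (h (F x) - trModelInf Ω h p x R (F x) A + L * κ * c * R) := by gcongr; linarith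
    _ = R⁻¹ * (h (F x) - trModelInf Ω h p x R (F x) A) + L * κ * c := by field_simp

lemma mul_eta_le_sub_trModelInf (F : (Fin n → ℝ) → (Fin m → ℝ)) (hp : p ≠ 0) (hΩ : Convex ℝ Ω)
    (hx : x ∈ Ω) (hconv : ConvexOn ℝ Set.univ h) (hL : 0 ≤ L)
    (hh : ∀ z w, |h z - h w| ≤ L * eucNorm (z - w)) (hc0 : 0 ≤ c)
    (hc : ∀ s : Fin n → ℝ, eucNorm s ≤ c * pNorm p s) {r R : ℝ} (hr : 0 < r) (hrR : r ≤ R)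
    (A : Matrix (Fin m) (Fin n) ℝ) :
    r * eta Ω F h p R x A ≤ h (F x) - trModelInf Ω h p x r (F x) A := by
  have hR : 0 < R := hr.trans_le hrR
  have hφ : ConvexOn ℝ Set.univ fun s => h (F x + A *ᵥ s) := by
    have := (hconv.translate_right (F x)).comp_linearMap (Matrix.mulVecLin A)
    rwa [Set.preimage_univ, Set.preimage_univ] at this
  have hST : ∀ s ∈ trRegion Ω p x R, (r / R) • s ∈ trRegion Ω p x r := fun s hs => by
    simpa [div_mul_cancel₀ r hR.ne'] using smul_mem_trRegion hp hΩ hx hs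
      (div_nonneg hr.le hR.le) ((div_le_one hR).2 hrR)
  have := mul_sub_csInf_image_le hφ ⟨0, zero_mem_trRegion hp hx hR.le⟩
    (bddBelow_image_trRegion hL hh hc0 hc r _ _) (div_pos hr hR) ((div_le_one hR).2 hrR) hST
  simp only [mulVec_zero, add_zero] at this
  rw [eta_eq_trModelInf, ← mul_assoc, ← div_eq_mul_inv]
  exact this

end TrustRegion

section TRFD

variable {n m : ℕ} {Ω : Set (Fin n → ℝ)} {F : (Fin n → ℝ) → (Fin m → ℝ)}
  {h : (Fin m → ℝ) → ℝ} {p : ℝ≥0∞} {Lh cpm cnp ε σ α θ Δstar : ℝ}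
  {x : ℕ → Fin n → ℝ} {τ Δ : ℕ → ℝ} {A : ℕ → Matrix (Fin m) (Fin n) ℝ}
  {d : ℕ → Fin n → ℝ} {ρ : ℕ → ℝ}

theorem TRFDrun.invariant (hrun : TRFDrun Ω F h p Lh cpm cnp ε σ α θ Δstar x τ Δ A d ρ)
    (hτ0 : 0 < τ 0) (k : ℕ) :
    x k ∈ Ω ∧ 0 < τ k ∧ τ k * Real.sqrt n ≤ Δ k ∧ Δ k ≤ Δstar := by
  obtain ⟨hx0, -, hτΔ0, hΔ0, -, hstep⟩ := hrun
  induction k with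
  | zero => exact ⟨hx0, hτ0, hτΔ0, hΔ0⟩
  | succ k ih =>
    obtain ⟨hxk, hτk, hτΔ, hΔ⟩ := ih
    have hτn : 0 ≤ τ k * Real.sqrt n := by positivity
    rcases hstep k with ⟨-, hx, hΔ', hτ'⟩ | ⟨-, -, hxd, -, -, hsucc | hU2 | hU3⟩
    · rw [hx, hΔ', hτ']
      exact ⟨hxk, half_pos hτk, by linarith, hΔ⟩
    · obtain ⟨-, hx, hΔ', hτ'⟩ := hsucc
      rw [hx, hΔ', hτ']
      exact ⟨hxd, hτk, le_min (by linarith) (hτΔ.trans hΔ), min_le_right _ _⟩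
    · obtain ⟨-, hτΔ', hx, hΔ', hτ'⟩ := hU2
      rw [hx, hΔ', hτ']
      exact ⟨hxk, hτk, hτΔ', by linarith⟩
    · obtain ⟨-, -, hx, hΔ', hτ'⟩ := hU3
      rw [hx, hΔ', hτ']
      exact ⟨hxk, half_pos hτk, by linarith, by linarith⟩

end TRFD

section Step

variable {n m : ℕ} {Ω : Set (Fin n → ℝ)} {p : ℝ≥0∞} {x : Fin n → ℝ}
  {F : (Fin n → ℝ) → (Fin m → ℝ)} {J : (Fin n → ℝ) → Matrix (Fin m) (Fin n) ℝ}
  {h : (Fin m → ℝ) → ℝ} {LJ L c τ Δ R : ℝ}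

/-- `ψ - η` is at most the finite-difference error `L LJ τ √n c / 2`, which `τ √n ≤ Δ` and `hΔ`
bound by `η / 2`. -/
theorem psi_le_three_halves_eta (hp : p ≠ 0) (hx : x ∈ Ω) (hLJ : 0 ≤ LJ)
    (hJ : ∀ y, HasFDerivAt F (LinearMap.toContinuousLinearMap (Matrix.mulVecLin (J y))) y)
    (hJLip : ∀ y z, opNorm2 (J y - J z) ≤ LJ * eucNorm (y - z)) (hL : 0 ≤ L)
    (hh : ∀ z w, |h z - h w| ≤ L * eucNorm (z - w)) (hc1 : 1 ≤ c)
    (hc : ∀ s : Fin n → ℝ, eucNorm s ≤ c * pNorm p s) (hτ : 0 < τ) (hτΔ : τ * Real.sqrt n ≤ Δ)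
    (hR : 0 < R) (hΔ : Δ * (L * LJ * c ^ 2) ≤ eta Ω F h p R x (fdMatrix F x τ)) :
    psi Ω F h J p R x ≤ 3 / 2 * eta Ω F h p R x (fdMatrix F x τ) := by
  have hc0 : 0 ≤ c := zero_le_one.trans hc1
  have hgap := psi_le_eta_add F J hp hx hR hL hh hc0 hc (by positivity)
    (eucNorm_fdMatrix_sub_mulVec_le hLJ hJ hJLip x hτ)
  have hΔ0 : 0 ≤ Δ := (by positivity : 0 ≤ τ * Real.sqrt n).trans hτΔ
  have hτc : τ * Real.sqrt n * c ≤ Δ * c ^ 2 := by gcongr; nlinarith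
  have := mul_le_mul_of_nonneg_left hτc (by positivity : 0 ≤ L * LJ)
  linarith

theorem le_ratio_of_radius_le (hp : p ≠ 0) (hΩ : Convex ℝ Ω) (hx : x ∈ Ω)
    (hconv : ConvexOn ℝ Set.univ h) (hLJ : 0 ≤ LJ)
    (hJ : ∀ y, HasFDerivAt F (LinearMap.toContinuousLinearMap (Matrix.mulVecLin (J y))) y)
    (hJLip : ∀ y z, opNorm2 (J y - J z) ≤ LJ * eucNorm (y - z)) (hL : 0 ≤ L)
    (hh : ∀ z w, |h z - h w| ≤ L * eucNorm (z - w)) (hc1 : 1 ≤ c)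
    (hc : ∀ s : Fin n → ℝ, eucNorm s ≤ c * pNorm p s) (hτ : 0 < τ) (hτΔ : τ * Real.sqrt n ≤ Δ)
    (hΔ0 : 0 < Δ) (hΔR : Δ ≤ R) (hη : 0 < eta Ω F h p R x (fdMatrix F x τ)) {α θ : ℝ}
    (hα : α < 1) (hθ : 0 < θ)
    (hΔ : Δ * (L * LJ * c ^ 2) ≤ (1 - α) * θ * eta Ω F h p R x (fdMatrix F x τ))
    {d : Fin n → ℝ} (hd : pNorm p d ≤ Δ)
    (hdec : θ * (h (F x) - trModelInf Ω h p x Δ (F x) (fdMatrix F x τ)) ≤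
      h (F x) - h (F x + fdMatrix F x τ *ᵥ d)) :
    α ≤ (h (F x) - h (F (x + d))) / (h (F x) - h (F x + fdMatrix F x τ *ᵥ d)) := by
  set η := eta Ω F h p R x (fdMatrix F x τ)
  have hc0 : 0 ≤ c := zero_le_one.trans hc1
  have hpred : θ * (Δ * η) ≤ h (F x) - h (F x + fdMatrix F x τ *ᵥ d) :=
    (mul_le_mul_of_nonneg_left (mul_eta_le_sub_trModelInf F hp hΩ hx hconv hL hh hc0 hc hΔ0 hΔR _)
      hθ.le).trans hdec
  have hmodel := eucNorm_sub_fdModel_le_sq hLJ hJ hJLip x hτ hc1 hτΔ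
    ((hc d).trans (mul_le_mul_of_nonneg_left hd hc0))
  have hdiff := (le_abs_self _).trans (hh (F (x + d)) (F x + fdMatrix F x τ *ᵥ d))
  have herr : L * (LJ * c ^ 2 * Δ ^ 2) ≤ (1 - α) * (θ * (Δ * η)) := calc
    _ = Δ * (Δ * (L * LJ * c ^ 2)) := by ring
    _ ≤ Δ * ((1 - α) * θ * η) := by gcongr
    _ = (1 - α) * (θ * (Δ * η)) := by ring
  rw [le_div_iff₀ ((by positivity : 0 < θ * (Δ * η)).trans_le hpred)]
  nlinarith [mul_le_mul_of_nonneg_left hmodel hL, mul_le_mul_of_nonneg_left hpred (sub_pos.2 hα).le]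

end Step

theorem stmt8_general
    {n m : ℕ} (hn : 1 ≤ n) (p : ℝ≥0∞) (hp : 1 ≤ p)
    (Ω : Set (Fin n → ℝ)) (hΩcv : Convex ℝ Ω)
    (F : (Fin n → ℝ) → (Fin m → ℝ)) (J : (Fin n → ℝ) → Matrix (Fin m) (Fin n) ℝ)
    (hJ : ∀ y, HasFDerivAt F (LinearMap.toContinuousLinearMap (Matrix.mulVecLin (J y))) y)
    (LJ : ℝ) (hLJ : 0 < LJ)
    (hJLip : ∀ y z, opNorm2 (J y - J z) ≤ LJ * eucNorm (y - z))
    (h : (Fin m → ℝ) → ℝ) (hconv : ConvexOn ℝ Set.univ h)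
    (Lh : ℝ) (hLh : 0 < Lh)
    (hhLip : ∀ z w, |h z - h w| ≤ Lh * pNorm p (z - w))
    (cnp cpm : ℝ) (hcnp1 : 1 ≤ cnp) (hcpm1 : 1 ≤ cpm)
    (hcnp : ∀ v : Fin n → ℝ, eucNorm v ≤ cnp * pNorm p v)
    (hcpm : ∀ z : Fin m → ℝ, pNorm p z ≤ cpm * eucNorm z)
    (ε σ α θ Δstar : ℝ) (hε : 0 < ε) (hσ : 0 < σ)
    (hα0 : 0 < α) (hα1 : α < 1) (hθ0 : 0 < θ) (hθ1 : θ ≤ 1)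
    (x : ℕ → Fin n → ℝ) (τ Δ : ℕ → ℝ) (A : ℕ → Matrix (Fin m) (Fin n) ℝ)
    (d : ℕ → Fin n → ℝ) (ρ : ℕ → ℝ)
    (hrun : TRFDrun Ω F h p Lh cpm cnp ε σ α θ Δstar x τ Δ A d ρ)
    (k : ℕ) (hψ : ε < psi Ω F h J p Δstar (x k))
    (hΔk : Δ k ≤ (1 - α) * θ * eta Ω F h p Δstar (x k) (A k) /
      (Lh * LJ * cpm * cnp ^ 2)) :
    ε / 2 ≤ eta Ω F h p Δstar (x k) (A k) ∧ α ≤ ρ k := by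
  have hp0 : p ≠ 0 := (zero_lt_one.trans_le hp).ne'
  have hsqrt : 0 < Real.sqrt n := Real.sqrt_pos.2 (by exact_mod_cast hn)
  have hcpm0 : 0 < cpm := zero_lt_one.trans_le hcpm1
  obtain ⟨hxk, hτk, hτΔ, hΔ⟩ := hrun.invariant (by rw [hrun.2.1]; positivity) k
  have hΔk0 : 0 < Δ k := (mul_pos hτk hsqrt).trans_le hτΔ
  have hh : ∀ z w, |h z - h w| ≤ Lh * cpm * eucNorm (z - w) := fun z w =>
    (hhLip z w).trans (by rw [mul_assoc]; gcongr; exact hcpm _)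
  have hA : A k = fdMatrix F (x k) (τ k) := hrun.2.2.2.2.1 k
  rw [hA] at hΔk ⊢
  set η := eta Ω F h p Δstar (x k) (fdMatrix F (x k) (τ k))
  have hC : Δ k * (Lh * cpm * LJ * cnp ^ 2) ≤ (1 - α) * θ * η := by
    rw [le_div_iff₀ (by positivity)] at hΔk; linarith
  have hη0 : 0 ≤ η := (mul_nonneg_iff_of_pos_left (mul_pos (sub_pos.2 hα1) hθ0)).1
    ((by positivity : 0 ≤ Δ k * (Lh * cpm * LJ * cnp ^ 2)).trans hC)
  have hθη : (1 - α) * θ * η ≤ η := mul_le_of_le_one_left hη0 (mul_le_one₀ (by linarith) hθ0.le hθ1)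
  have hη : ε / 2 ≤ η := by
    linarith [psi_le_three_halves_eta hp0 hxk hLJ.le hJ hJLip (by positivity) hh hcnp1 hcnp hτk
      hτΔ (hΔk0.trans_le hΔ) (hC.trans hθη)]
  refine ⟨hη, ?_⟩
  rcases hrun.2.2.2.2.2 k with ⟨hlt, -⟩ | ⟨-, hdk, -, hdec, hρ, -⟩
  · rw [hA] at hlt; linarith
  rw [hA] at hdec hρ
  rw [hρ]
  exact le_ratio_of_radius_le hp0 hΩcv hxk hconv hLJ.le hJ hJLip (by positivity) hh hcnp1 hcnp hτk
    hτΔ hΔk0 hΔ (by linarith) hα1 hθ0 hC hdk hdec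

/-- Lemma 3.2: sufficient condition for a successful iteration. -/
theorem stmt8
    {n m : ℕ} (hn : 1 ≤ n) (hm : 1 ≤ m) (p : ℝ≥0∞) (hp : 1 ≤ p)
    (Ω : Set (Fin n → ℝ)) (hΩne : Ω.Nonempty) (hΩcl : IsClosed Ω) (hΩcv : Convex ℝ Ω)
    (F : (Fin n → ℝ) → (Fin m → ℝ)) (J : (Fin n → ℝ) → Matrix (Fin m) (Fin n) ℝ)
    (hJ : ∀ y, HasFDerivAt F (LinearMap.toContinuousLinearMap (Matrix.mulVecLin (J y))) y)
    (LJ : ℝ) (hLJ : 0 < LJ)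
    (hJLip : ∀ y z, opNorm2 (J y - J z) ≤ LJ * eucNorm (y - z))
    (h : (Fin m → ℝ) → ℝ) (hconv : ConvexOn ℝ Set.univ h)
    (Lh : ℝ) (hLh : 0 < Lh)
    (hhLip : ∀ z w, |h z - h w| ≤ Lh * pNorm p (z - w))
    (cnp cpm : ℝ) (hcnp1 : 1 ≤ cnp) (hcpm1 : 1 ≤ cpm)
    (hcnp : ∀ v : Fin n → ℝ, eucNorm v ≤ cnp * pNorm p v)
    (hcpm : ∀ z : Fin m → ℝ, pNorm p z ≤ cpm * eucNorm z)
    (ε σ α θ Δstar : ℝ) (hε : 0 < ε) (hσ : 0 < σ)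
    (hα0 : 0 < α) (hα1 : α < 1) (hθ0 : 0 < θ) (hθ1 : θ ≤ 1)
    (x : ℕ → Fin n → ℝ) (τ Δ : ℕ → ℝ) (A : ℕ → Matrix (Fin m) (Fin n) ℝ)
    (d : ℕ → Fin n → ℝ) (ρ : ℕ → ℝ)
    (hrun : TRFDrun Ω F h p Lh cpm cnp ε σ α θ Δstar x τ Δ A d ρ)
    (k : ℕ) (hψ : ε < psi Ω F h J p Δstar (x k))
    (hΔk : Δ k ≤ (1 - α) * θ * eta Ω F h p Δstar (x k) (A k) /
      (Lh * LJ * cpm * cnp ^ 2)) :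
    ε / 2 ≤ eta Ω F h p Δstar (x k) (A k) ∧ α ≤ ρ k :=
  stmt8_general hn p hp Ω hΩcv F J hJ LJ hLJ hJLip h hconv Lh hLh hhLip cnp cpm hcnp1 hcpm1 hcnp
    hcpm ε σ α θ Δstar hε hσ hα0 hα1 hθ0 hθ1 x τ Δ A d ρ hrun k hψ hΔk
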